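/- Let ℓ ∈ ℕ and q ≥ 2. Every finite simple graph that is (ℓ,q)-near-covered is (2ℓ,q)-near-uniform or (8ℓ,q−1)-near-covered. -/

import Mathlib

/-!
Let `S` be a set of at most `q` vertices such that every vertex is a near-`ℓ`-twin of some
element of `S`. If two distinct elements `s, t ∈ S` are near-`4ℓ`-twins, then `t` can be dropped
from `S`: every vertex near `t` is, by the triangle inequality for `|N(·) △ N(·)|`, within `5ℓ` of
`s`. Otherwise `S` is `4ℓ`-separated; assigning to each vertex `u` a nearby element `f u ∈ S`,
the triangle inequality shows that `u, v` are near-`2ℓ`-twins exactly when `f u = f v`, so the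
near-`2ℓ`-twin relation is the kernel of `f` and has at most `|S|` classes.
-/

/-- Two vertices `u`, `v` of a simple graph `G` are *near-`k`-twins* if the symmetric
difference of their open neighbourhoods has at most `k` elements. -/
def nearTwin {V : Type*} (G : SimpleGraph V) (k : ℕ) (u v : V) : Prop :=
  (symmDiff (G.neighborSet u) (G.neighborSet v)).ncard ≤ k

/-- A graph is `(k₀, p)`-near-uniform if for some `k ≤ k₀` the near-`k`-twin relation is
an equivalence relation with at most `p` equivalence classes. -/
def NearUniform {V : Type*} (G : SimpleGraph V) (k₀ p : ℕ) : Prop :=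
  ∃ k ≤ k₀, Equivalence (nearTwin G k) ∧
    {C : Set V | ∃ u, C = {v | nearTwin G k u v}}.ncard ≤ p

/-- A graph is `(ℓ, q)`-near-covered if there is a set `S` of at most `q` vertices such that
every vertex is a near-`ℓ`-twin of some element of `S`. -/
def NearCovered {V : Type*} (G : SimpleGraph V) (ℓ q : ℕ) : Prop :=
  ∃ S : Set V, S.ncard ≤ q ∧ ∀ v, ∃ s ∈ S, nearTwin G ℓ s v

lemma Set.ncard_relClasses_le_of_iff_eq {α β : Type*} [Finite α] {r : α → α → Prop}
    (f : α → β) (hr : ∀ u v, r u v ↔ f u = f v) :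
    {C : Set α | ∃ u, C = {v | r u v}}.ncard ≤ (Set.range f).ncard := by
  have hclasses : {C : Set α | ∃ u, C = {v | r u v}} = (fun b => {v | b = f v}) '' Set.range f := by
    ext C
    simp [hr, eq_comm]
  rw [hclasses]
  exact Set.ncard_image_le (Set.finite_range f)

lemma equivalence_of_iff_eq {α β : Type*} {r : α → α → Prop} (f : α → β)
    (hr : ∀ u v, r u v ↔ f u = f v) : Equivalence r :=
  ⟨fun _ => (hr _ _).2 rfl, fun h => (hr _ _).2 ((hr _ _).1 h).symm,
    fun h h' => (hr _ _).2 (((hr _ _).1 h).trans ((hr _ _).1 h'))⟩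

section

variable {V : Type*} {G : SimpleGraph V}

lemma nearTwin_refl (G : SimpleGraph V) (k : ℕ) (u : V) : nearTwin G k u u := by
  simp [nearTwin]

lemma nearTwin.symm {k : ℕ} {u v : V} (h : nearTwin G k u v) : nearTwin G k v u := by
  rwa [nearTwin, symmDiff_comm]

lemma nearTwin.mono {k k' : ℕ} {u v : V} (h : nearTwin G k u v) (hk : k ≤ k') :
    nearTwin G k' u v :=
  h.trans hk

lemma nearTwin.trans [Finite V] {k m : ℕ} {u v w : V} (h₁ : nearTwin G k u v)
    (h₂ : nearTwin G m v w) : nearTwin G (k + m) u w :=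
  calc (symmDiff (G.neighborSet u) (G.neighborSet w)).ncard
      ≤ (symmDiff (G.neighborSet u) (G.neighborSet v) ∪
          symmDiff (G.neighborSet v) (G.neighborSet w)).ncard :=
        Set.ncard_le_ncard (symmDiff_triangle _ _ _) (Set.toFinite _)
    _ ≤ _ + _ := Set.ncard_union_le _ _
    _ ≤ k + m := Nat.add_le_add h₁ h₂

lemma NearUniform.mono {k k' p p' : ℕ} (h : NearUniform G k p) (hk : k ≤ k') (hp : p ≤ p') :
    NearUniform G k' p' :=
  let ⟨j, hj, hequiv, hclasses⟩ := h
  ⟨j, hj.trans hk, hequiv, hclasses.trans hp⟩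

lemma NearCovered.mono {ℓ ℓ' q q' : ℕ} (h : NearCovered G ℓ q) (hℓ : ℓ ≤ ℓ') (hq : q ≤ q') :
    NearCovered G ℓ' q' :=
  let ⟨S, hS, hcov⟩ := h
  ⟨S, hS.trans hq, fun v => let ⟨s, hs, hsv⟩ := hcov v; ⟨s, hs, hsv.mono hℓ⟩⟩

lemma nearCovered_diff_singleton [Finite V] {ℓ m : ℕ} {S : Set V}
    (hcov : ∀ v, ∃ s ∈ S, nearTwin G ℓ s v) {s t : V} (hs : s ∈ S) (ht : t ∈ S) (hst : s ≠ t)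
    (hnear : nearTwin G m s t) : NearCovered G (m + ℓ) (S.ncard - 1) := by
  refine ⟨S \ {t}, (Set.ncard_sdiff_singleton_of_mem ht).le, fun v => ?_⟩
  obtain ⟨s', hs', hs'v⟩ := hcov v
  by_cases hs't : s' = t
  · subst hs't
    exact ⟨s, ⟨hs, hst⟩, hnear.trans hs'v⟩
  · exact ⟨s', ⟨hs', hs't⟩, hs'v.mono (by omega)⟩

lemma nearTwin_iff_eq_of_pairwise [Finite V] {ℓ : ℕ} {S : Set V}
    (hsep : S.Pairwise fun s t => ¬ nearTwin G (4 * ℓ) s t) {f : V → V} (hfS : ∀ u, f u ∈ S)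
    (hf : ∀ u, nearTwin G ℓ (f u) u) (u v : V) : nearTwin G (2 * ℓ) u v ↔ f u = f v := by
  constructor
  · intro huv
    by_contra hne
    exact hsep (hfS u) (hfS v) hne (((hf u).trans (huv.trans (hf v).symm)).mono (by omega))
  · intro hfuv
    exact ((hf u).symm.trans (hfuv ▸ hf v)).mono (by omega)

lemma nearUniform_of_pairwise [Finite V] {ℓ : ℕ} {S : Set V}
    (hcov : ∀ v, ∃ s ∈ S, nearTwin G ℓ s v)
    (hsep : S.Pairwise fun s t => ¬ nearTwin G (4 * ℓ) s t) :
    NearUniform G (2 * ℓ) S.ncard := by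
  choose f hfS hf using hcov
  have hker := nearTwin_iff_eq_of_pairwise hsep hfS hf
  refine ⟨2 * ℓ, le_rfl, equivalence_of_iff_eq f hker, ?_⟩
  calc _ ≤ (Set.range f).ncard := Set.ncard_relClasses_le_of_iff_eq f hker
    _ ≤ S.ncard := Set.ncard_le_ncard (Set.range_subset_iff.2 hfS) (Set.toFinite S)

end

theorem stmt7_general (ℓ q : ℕ) (V : Type) [Fintype V] (G : SimpleGraph V)
    (h : NearCovered G ℓ q) :
    NearUniform G (2 * ℓ) q ∨ NearCovered G (8 * ℓ) (q - 1) := by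
  obtain ⟨S, hS, hcov⟩ := h
  by_cases hsep : S.Pairwise fun s t => ¬ nearTwin G (4 * ℓ) s t
  · exact Or.inl ((nearUniform_of_pairwise hcov hsep).mono le_rfl hS)
  · simp only [Set.Pairwise, not_forall, not_not] at hsep
    obtain ⟨s, hs, t, ht, hst, hnear⟩ := hsep
    exact Or.inr ((nearCovered_diff_singleton hcov hs ht hst hnear).mono (by omega) (by omega))

theorem stmt7 (ℓ q : ℕ) (hq : 2 ≤ q) (V : Type) [Fintype V] (G : SimpleGraph V)
    (h : NearCovered G ℓ q) :
    NearUniform G (2 * ℓ) q ∨ NearCovered G (8 * ℓ) (q - 1) :=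
  stmt7_general ℓ q V G h
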